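/- For the parametrization Φ of Example 5: ∂²Φ/∂u_i∂u_j = 0 whenever i ≤ 4 or j ≤ 4; ∂²Φ/∂u5∂u5 + ∂²Φ/∂u6∂u6 = 0 and ∂²Φ/∂u7∂u7 + ∂²Φ/∂u8∂u8 = 0; and ḡ(Z5, Z6) = 0, ḡ(Z5, Z5) = ḡ(Z6, Z6), ḡ(Z7, Z8) = 0, ḡ(Z7, Z7) = ḡ(Z8, Z8). (These identities imply that the trace of the second fundamental form over the screen distribution vanishes, i.e. Example 5 is a minimal, non-totally-geodesic STCR lightlike submanifold.) -/

import Mathlib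

noncomputable section

/-- The semi-Euclidean metric of index 4 on `ℝ¹⁴`:
`ḡ(x,y) = −x₁y₁ − x₂y₂ − x₃y₃ − x₄y₄ + Σ_{i=5}^{14} xᵢyᵢ`. -/
def gbar : LinearMap.BilinForm ℝ (Fin 14 → ℝ) :=
  LinearMap.mk₂ ℝ
    (fun x y => -(x 0 * y 0) - x 1 * y 1 - x 2 * y 2 - x 3 * y 3
      + x 4 * y 4 + x 5 * y 5 + x 6 * y 6 + x 7 * y 7 + x 8 * y 8
      + x 9 * y 9 + x 10 * y 10 + x 11 * y 11 + x 12 * y 12 + x 13 * y 13)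
    (fun _ _ _ => by simp only [Pi.add_apply]; ring)
    (fun _ _ _ => by simp only [Pi.smul_apply, smul_eq_mul]; ring)
    (fun _ _ _ => by simp only [Pi.add_apply]; ring)
    (fun _ _ _ => by simp only [Pi.smul_apply, smul_eq_mul]; ring)

/-- The standard complex structure on `ℝ¹⁴`:
`J(x₁,x₂,…,x₁₃,x₁₄) = (−x₂,x₁,…,−x₁₄,x₁₃)`. -/
def Jmap (x : Fin 14 → ℝ) : Fin 14 → ℝ :=
  ![-(x 1), x 0, -(x 3), x 2, -(x 5), x 4, -(x 7), x 6, -(x 9), x 8,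
    -(x 11), x 10, -(x 13), x 12]

/-- The parametrization of the submanifold of Example 5 (with parameter `α`). -/
def Φ (α : ℝ) (u : Fin 8 → ℝ) : Fin 14 → ℝ :=
  ![u 0 * Real.sinh α + u 1 * Real.cosh α,
    (u 2 + u 3 / 2) * Real.sinh α,
    u 0,
    u 2 - u 3 / 2,
    u 1,
    0,
    Real.cos (u 4) * Real.cosh (u 5),
    Real.sin (u 4) * Real.sinh (u 5),
    u 0 * Real.cosh α + u 1 * Real.sinh α,
    (u 2 + u 3 / 2) * Real.cosh α,
    -(Real.sin (u 6) * Real.cosh (u 7)),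
    Real.cos (u 6) * Real.sinh (u 7),
    -(u 6 + u 7),
    u 6 - u 7]

/-- The coordinate tangent vectors `Z_i = ∂Φ/∂u_i`. -/
def Z (α : ℝ) (u : Fin 8 → ℝ) (i : Fin 8) : Fin 14 → ℝ :=
  fderiv ℝ (Φ α) u (Pi.single i 1)

/-- The second partial derivatives `∂²Φ/∂u_i∂u_j`. -/
def ZZ (α : ℝ) (u : Fin 8 → ℝ) (i j : Fin 8) : Fin 14 → ℝ :=
  fderiv ℝ (fun v => fderiv ℝ (Φ α) v (Pi.single i 1)) u (Pi.single j 1)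

/-!
Indices are 0-based: the paper's `u₁, …, u₈` are `u 0, …, u 7`, so its `Z₅` is `Z α u 4`.

`Φ` is affine in `u₁, …, u₄` and these coordinates occur in no other term, so
`Φ(v + t eᵢ) = Φ(v) + t wᵢ` for `i ≤ 4`. Hence `∂ᵢΦ` is constant and every `∂ⱼΦ` is invariant
under translation along `eᵢ`, so every second derivative involving such an `i` vanishes.

On a line parallel to one of the remaining axes, `Φ` has the form `c + s w + p(s) a + q(s) b` with
`(p, q) = (cos, sin)` along `u₅, u₇` and `(p, q) = (cosh, sinh)` along `u₆, u₈`. Thus `p'' = -p`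
in the first case and `p'' = p` in the second, so `∂₅₅Φ + ∂₆₆Φ` and `∂₇₇Φ + ∂₈₈Φ` cancel. The
nonlinear parts `(cos u₅ cosh u₆, sin u₅ sinh u₆)` and `(-sin u₇ cosh u₈, cos u₇ sinh u₈)` are
`cos z̄` and `-sin z̄` for `z = u₅ + i u₆`, resp. `z = u₇ + i u₈`, and the linear part
`(-(u₇ + u₈), u₇ - u₈)` is multiplication by `-1 + i`; all three are conformal, and `ḡ` is
Euclidean on the coordinates they occupy, which gives the relations between the `Zᵢ`.
-/

open Function Real

section AffineDirection

variable {𝕜 E F : Type*} [NontriviallyNormedField 𝕜] [NormedAddCommGroup E] [NormedSpace 𝕜 E]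
  [NormedAddCommGroup F] [NormedSpace 𝕜 F] {f g : E → F} {x y z : E} {w : F}

theorem fderiv_apply_eq_of_add_smul (hf : DifferentiableAt 𝕜 f x)
    (hw : ∀ t : 𝕜, f (x + t • y) = f x + t • w) : fderiv 𝕜 f x y = w := by
  rw [← hf.lineDeriv_eq_fderiv, lineDeriv, funext hw, deriv_const_add,
    ((hasDerivAt_id _).smul_const w).deriv, one_smul]

theorem fderiv_apply_eq_zero_of_add_smul_eq (hg : ∀ x (t : 𝕜), g (x + t • y) = g x) :
    fderiv 𝕜 g x y = 0 := by
  by_cases hd : DifferentiableAt 𝕜 g x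
  · exact fderiv_apply_eq_of_add_smul hd fun t => by rw [hg, smul_zero, add_zero]
  · rw [fderiv_zero_of_not_differentiableAt hd]
    rfl

theorem fderiv_add_smul_eq_of_add_smul (hw : ∀ x (t : 𝕜), f (x + t • y) = f x + t • w)
    (t : 𝕜) : fderiv 𝕜 f (x + t • y) = fderiv 𝕜 f x := by
  rw [← fderiv_comp_add_right, funext fun x => hw x t, fderiv_add_const]

theorem fderiv_fderiv_apply_eq_zero_of_add_smul_left (hf : Differentiable 𝕜 f)
    (hw : ∀ x (t : 𝕜), f (x + t • y) = f x + t • w) :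
    fderiv 𝕜 (fun v => fderiv 𝕜 f v y) x z = 0 := by
  rw [funext fun v => fderiv_apply_eq_of_add_smul (hf v) (hw v), fderiv_const_apply]
  rfl

theorem fderiv_fderiv_apply_eq_zero_of_add_smul_right
    (hw : ∀ x (t : 𝕜), f (x + t • y) = f x + t • w) :
    fderiv 𝕜 (fun v => fderiv 𝕜 f v z) x y = 0 :=
  fderiv_apply_eq_zero_of_add_smul_eq fun x t => by rw [fderiv_add_smul_eq_of_add_smul hw]

end AffineDirection

section Coordinate

variable {𝕜 ι F : Type*} [NontriviallyNormedField 𝕜] [Fintype ι] [DecidableEq ι]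
  [NormedAddCommGroup F] [NormedSpace 𝕜 F] {f : (ι → 𝕜) → F} {u : ι → 𝕜} {i : ι}

theorem deriv_comp_update (s : 𝕜) (hf : DifferentiableAt 𝕜 f (update u i s)) :
    deriv (fun s => f (update u i s)) s = fderiv 𝕜 f (update u i s) (Pi.single i 1) :=
  (hf.hasFDerivAt.comp_hasDerivAt s (hasDerivAt_update u i s)).deriv

theorem fderiv_apply_single_eq_deriv_update (hf : DifferentiableAt 𝕜 f u) :
    fderiv 𝕜 f u (Pi.single i 1) = deriv (fun s => f (update u i s)) (u i) := by
  rw [deriv_comp_update _ (by rwa [update_eq_self]), update_eq_self]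

theorem fderiv_fderiv_apply_single_eq_deriv_deriv_update (hf : ContDiff 𝕜 2 f) :
    fderiv 𝕜 (fun v => fderiv 𝕜 f v (Pi.single i 1)) u (Pi.single i 1) =
      deriv (deriv fun s => f (update u i s)) (u i) := by
  have hf1 : Differentiable 𝕜 f := hf.differentiable (by norm_num)
  have hg : Differentiable 𝕜 fun v => fderiv 𝕜 f v (Pi.single i 1) :=
    ((hf.fderiv_right (m := 1) (by norm_num)).clm_apply contDiff_const).differentiable
      (by norm_num)
  have hderiv : deriv (fun s => f (update u i s)) =
      fun s => fderiv 𝕜 f (update u i s) (Pi.single i 1) :=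
    funext fun s => deriv_comp_update s (hf1 _)
  rw [hderiv, fderiv_apply_single_eq_deriv_update (hg u)]

end Coordinate

section PlaneCurve

variable {𝕜 F : Type*} [NontriviallyNormedField 𝕜] [NormedAddCommGroup F] [NormedSpace 𝕜 F]
  {g : 𝕜 → F} {c w a b : F} {p q p' q' p'' q'' : 𝕜 → 𝕜}

theorem deriv_eq_of_eq_add_smul_add_smul (hp : ∀ s, HasDerivAt p (p' s) s)
    (hq : ∀ s, HasDerivAt q (q' s) s) (hg : ∀ s, g s = c + s • w + (p s • a + q s • b)) :
    deriv g = fun s => w + (p' s • a + q' s • b) := by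
  funext s
  rw [funext hg]
  exact ((((hasDerivAt_id s).smul_const w).const_add c).add
    (((hp s).smul_const a).add ((hq s).smul_const b))).deriv.trans (by rw [one_smul])

theorem deriv_deriv_eq_of_eq_add_smul_add_smul (hp : ∀ s, HasDerivAt p (p' s) s)
    (hq : ∀ s, HasDerivAt q (q' s) s) (hp' : ∀ s, HasDerivAt p' (p'' s) s)
    (hq' : ∀ s, HasDerivAt q' (q'' s) s) (hg : ∀ s, g s = c + s • w + (p s • a + q s • b)) :
    deriv (deriv g) = fun s => p'' s • a + q'' s • b := by
  funext s
  rw [deriv_eq_of_eq_add_smul_add_smul hp hq hg]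
  exact ((((hp' s).smul_const a).add ((hq' s).smul_const b)).const_add w).deriv

end PlaneCurve

theorem contDiff_Φ (α : ℝ) : ContDiff ℝ 2 (Φ α) := by
  rw [contDiff_pi]
  intro k
  fin_cases k <;> simp [Φ] <;> fun_prop

theorem differentiable_Φ (α : ℝ) : Differentiable ℝ (Φ α) :=
  (contDiff_Φ α).differentiable (by norm_num)

theorem Φ_add_smul_single (α : ℝ) {i : Fin 8} (hi : i.val ≤ 3) :
    ∃ w, ∀ (v : Fin 8 → ℝ) (t : ℝ), Φ α (v + t • Pi.single i 1) = Φ α v + t • w := by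
  refine ⟨Φ α (Pi.single i 1) - Φ α 0, fun v t => ?_⟩
  ext k
  simp only [Pi.add_apply, Pi.sub_apply, Pi.smul_apply, smul_eq_mul]
  fin_cases i <;> simp at hi <;> fin_cases k <;> simp [Φ] <;> ring

theorem Φ_update_four (α : ℝ) (u : Fin 8 → ℝ) (s : ℝ) :
    Φ α (update u 4 s) =
      Φ α u - (cos (u 4) • Pi.single 6 (cosh (u 5)) + sin (u 4) • Pi.single 7 (sinh (u 5)))
        + (cos s • Pi.single 6 (cosh (u 5)) + sin s • Pi.single 7 (sinh (u 5))) := by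
  ext k
  simp only [Pi.add_apply, Pi.sub_apply, Pi.smul_apply, smul_eq_mul]
  fin_cases k <;> simp [Φ]

theorem Φ_update_five (α : ℝ) (u : Fin 8 → ℝ) (s : ℝ) :
    Φ α (update u 5 s) =
      Φ α u - (cosh (u 5) • Pi.single 6 (cos (u 4)) + sinh (u 5) • Pi.single 7 (sin (u 4)))
        + (cosh s • Pi.single 6 (cos (u 4)) + sinh s • Pi.single 7 (sin (u 4))) := by
  ext k
  simp only [Pi.add_apply, Pi.sub_apply, Pi.smul_apply, smul_eq_mul]
  fin_cases k <;> simp [Φ, mul_comm]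

theorem Φ_update_six (α : ℝ) (u : Fin 8 → ℝ) (s : ℝ) :
    Φ α (update u 6 s) = Φ α u - u 6 • (Pi.single 12 (-1) + Pi.single 13 1)
      - (cos (u 6) • Pi.single 11 (sinh (u 7)) + sin (u 6) • Pi.single 10 (-cosh (u 7)))
      + s • (Pi.single 12 (-1) + Pi.single 13 1)
      + (cos s • Pi.single 11 (sinh (u 7)) + sin s • Pi.single 10 (-cosh (u 7))) := by
  ext k
  simp only [Pi.add_apply, Pi.sub_apply, Pi.smul_apply, smul_eq_mul]
  fin_cases k <;> simp [Φ, sub_eq_neg_add]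

theorem Φ_update_seven (α : ℝ) (u : Fin 8 → ℝ) (s : ℝ) :
    Φ α (update u 7 s) = Φ α u - u 7 • (Pi.single 12 (-1) + Pi.single 13 (-1))
      - (cosh (u 7) • Pi.single 10 (-sin (u 6)) + sinh (u 7) • Pi.single 11 (cos (u 6)))
      + s • (Pi.single 12 (-1) + Pi.single 13 (-1))
      + (cosh s • Pi.single 10 (-sin (u 6)) + sinh s • Pi.single 11 (cos (u 6))) := by
  ext k
  simp only [Pi.add_apply, Pi.sub_apply, Pi.smul_apply, smul_eq_mul]
  fin_cases k <;> simp [Φ] <;> ring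

theorem Z_four (α : ℝ) (u : Fin 8 → ℝ) :
    Z α u 4 = -sin (u 4) • Pi.single 6 (cosh (u 5)) + cos (u 4) • Pi.single 7 (sinh (u 5)) := by
  rw [Z, fderiv_apply_single_eq_deriv_update (differentiable_Φ α u),
    deriv_eq_of_eq_add_smul_add_smul (w := 0) hasDerivAt_cos hasDerivAt_sin
      fun s => by rw [Φ_update_four, smul_zero, add_zero]]
  exact zero_add _

theorem Z_five (α : ℝ) (u : Fin 8 → ℝ) :
    Z α u 5 = sinh (u 5) • Pi.single 6 (cos (u 4)) + cosh (u 5) • Pi.single 7 (sin (u 4)) := by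
  rw [Z, fderiv_apply_single_eq_deriv_update (differentiable_Φ α u),
    deriv_eq_of_eq_add_smul_add_smul (w := 0) hasDerivAt_cosh hasDerivAt_sinh
      fun s => by rw [Φ_update_five, smul_zero, add_zero]]
  exact zero_add _

theorem Z_six (α : ℝ) (u : Fin 8 → ℝ) :
    Z α u 6 = Pi.single 12 (-1) + Pi.single 13 1
      + (-sin (u 6) • Pi.single 11 (sinh (u 7)) + cos (u 6) • Pi.single 10 (-cosh (u 7))) := by
  rw [Z, fderiv_apply_single_eq_deriv_update (differentiable_Φ α u),
    deriv_eq_of_eq_add_smul_add_smul hasDerivAt_cos hasDerivAt_sin (Φ_update_six α u)]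

theorem Z_seven (α : ℝ) (u : Fin 8 → ℝ) :
    Z α u 7 = Pi.single 12 (-1) + Pi.single 13 (-1)
      + (sinh (u 7) • Pi.single 10 (-sin (u 6)) + cosh (u 7) • Pi.single 11 (cos (u 6))) := by
  rw [Z, fderiv_apply_single_eq_deriv_update (differentiable_Φ α u),
    deriv_eq_of_eq_add_smul_add_smul hasDerivAt_cosh hasDerivAt_sinh (Φ_update_seven α u)]

theorem ZZ_four_four (α : ℝ) (u : Fin 8 → ℝ) :
    ZZ α u 4 4 =
      -cos (u 4) • Pi.single 6 (cosh (u 5)) + -sin (u 4) • Pi.single 7 (sinh (u 5)) := by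
  rw [ZZ, fderiv_fderiv_apply_single_eq_deriv_deriv_update (contDiff_Φ α),
    deriv_deriv_eq_of_eq_add_smul_add_smul (w := 0) hasDerivAt_cos hasDerivAt_sin
      (fun s => (hasDerivAt_sin s).neg) hasDerivAt_cos
      fun s => by rw [Φ_update_four, smul_zero, add_zero]]

theorem ZZ_five_five (α : ℝ) (u : Fin 8 → ℝ) :
    ZZ α u 5 5 =
      cosh (u 5) • Pi.single 6 (cos (u 4)) + sinh (u 5) • Pi.single 7 (sin (u 4)) := by
  rw [ZZ, fderiv_fderiv_apply_single_eq_deriv_deriv_update (contDiff_Φ α),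
    deriv_deriv_eq_of_eq_add_smul_add_smul (w := 0) hasDerivAt_cosh hasDerivAt_sinh
      hasDerivAt_sinh hasDerivAt_cosh fun s => by rw [Φ_update_five, smul_zero, add_zero]]

theorem ZZ_six_six (α : ℝ) (u : Fin 8 → ℝ) :
    ZZ α u 6 6 =
      -cos (u 6) • Pi.single 11 (sinh (u 7)) + -sin (u 6) • Pi.single 10 (-cosh (u 7)) := by
  rw [ZZ, fderiv_fderiv_apply_single_eq_deriv_deriv_update (contDiff_Φ α),
    deriv_deriv_eq_of_eq_add_smul_add_smul hasDerivAt_cos hasDerivAt_sin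
      (fun s => (hasDerivAt_sin s).neg) hasDerivAt_cos (Φ_update_six α u)]

theorem ZZ_seven_seven (α : ℝ) (u : Fin 8 → ℝ) :
    ZZ α u 7 7 =
      cosh (u 7) • Pi.single 10 (-sin (u 6)) + sinh (u 7) • Pi.single 11 (cos (u 6)) := by
  rw [ZZ, fderiv_fderiv_apply_single_eq_deriv_deriv_update (contDiff_Φ α),
    deriv_deriv_eq_of_eq_add_smul_add_smul hasDerivAt_cosh hasDerivAt_sinh
      hasDerivAt_sinh hasDerivAt_cosh (Φ_update_seven α u)]

theorem ZZ_four_four_add_ZZ_five_five (α : ℝ) (u : Fin 8 → ℝ) :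
    ZZ α u 4 4 + ZZ α u 5 5 = 0 := by
  ext k
  simp only [ZZ_four_four, ZZ_five_five, Pi.add_apply, Pi.smul_apply, Pi.single_apply,
    smul_eq_mul, Pi.zero_apply]
  split_ifs <;> ring

theorem ZZ_six_six_add_ZZ_seven_seven (α : ℝ) (u : Fin 8 → ℝ) :
    ZZ α u 6 6 + ZZ α u 7 7 = 0 := by
  ext k
  simp only [ZZ_six_six, ZZ_seven_seven, Pi.add_apply, Pi.smul_apply, Pi.single_apply,
    smul_eq_mul, Pi.zero_apply]
  split_ifs <;> ring

theorem example5_is_minimal (α : ℝ) (u : Fin 8 → ℝ) :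
    (∀ i j : Fin 8, (i.val ≤ 3 ∨ j.val ≤ 3) → ZZ α u i j = 0) ∧
    ZZ α u 4 4 + ZZ α u 5 5 = 0 ∧
    ZZ α u 6 6 + ZZ α u 7 7 = 0 ∧
    gbar (Z α u 4) (Z α u 5) = 0 ∧
    gbar (Z α u 4) (Z α u 4) = gbar (Z α u 5) (Z α u 5) ∧
    gbar (Z α u 6) (Z α u 7) = 0 ∧
    gbar (Z α u 6) (Z α u 6) = gbar (Z α u 7) (Z α u 7) := by
  refine ⟨fun i j hij => ?_, ZZ_four_four_add_ZZ_five_five α u,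
    ZZ_six_six_add_ZZ_seven_seven α u, ?_, ?_, ?_, ?_⟩
  · rcases hij with hi | hj
    · obtain ⟨w, hw⟩ := Φ_add_smul_single α hi
      exact fderiv_fderiv_apply_eq_zero_of_add_smul_left (differentiable_Φ α) hw
    · obtain ⟨w, hw⟩ := Φ_add_smul_single α hj
      exact fderiv_fderiv_apply_eq_zero_of_add_smul_right hw
  all_goals
    simp only [gbar, LinearMap.mk₂_apply, Z_four, Z_five, Z_six, Z_seven, Pi.add_apply,
      Pi.smul_apply, Pi.single_apply, smul_eq_mul, Fin.reduceEq, ↓reduceIte]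
    ring
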